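/- Let d < 0 be squarefree, β = -1/2 + t√d with t ∈ ℝ, and φ the Hermitian form with matrix [[1,β],[β̄,1]]. If φ is positive definite and a = a₁+a₂√d, b = b₁+b₂√d ∈ ℚ(√d) satisfy a₁b₂ ≠ a₂b₁ and φ(a,b) = 1, then -d·(1 - a₁² + a₂²d + a₁b₁ - a₂db₂ - b₁² + b₂²d)² / (2d·a₁b₂ - 2d·a₂b₁)² < 3/4. -/

import Mathlib

/-!
Testing positivity of `φ` at `(1, -β)` gives `|β|² < 1`, i.e. `-d t² < 3/4`. Since `√d` is purely
imaginary with square `d`, the equation `φ(a, b) = 1` is an identity between real numbers, and it says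
precisely that the numerator `1 - a₁² + ⋯` equals `-t` times the denominator `2d(a₁b₂ - a₂b₁)`.
Hence the quotient is exactly `-d t²`.
-/

noncomputable def sqrtd (d : ℤ) : ℂ := Complex.I * Real.sqrt (-d)

noncomputable def phi (a c : ℚ) (b : ℂ) (x y : ℂ) : ℂ :=
  a * x * (starRingEnd ℂ) x + b * x * (starRingEnd ℂ) y
    + (starRingEnd ℂ) b * (starRingEnd ℂ) x * y + c * y * (starRingEnd ℂ) y

open Complex ComplexConjugate

lemma conj_sqrtd (d : ℤ) : conj (sqrtd d) = -sqrtd d := by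
  simp [sqrtd]

lemma sqrtd_mul_self {d : ℤ} (hd : d ≤ 0) : sqrtd d * sqrtd d = d := by
  have h : (Real.sqrt (-d) : ℂ) * Real.sqrt (-d) = -d := by
    rw [← ofReal_mul, Real.mul_self_sqrt (by simpa using hd)]; push_cast; ring
  simp only [sqrtd]
  linear_combination (-1 : ℂ) * h + (Real.sqrt (-d) : ℂ) ^ 2 * I_sq

lemma phi_one_one_one_neg (β : ℂ) : phi 1 1 β 1 (-β) = 1 - normSq β := by
  simp only [phi, map_one, map_neg, ← mul_conj]
  push_cast
  ring

lemma normSq_lt_one_of_phi_pos {β : ℂ}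
    (hpos : ∀ x y : ℂ, ¬(x = 0 ∧ y = 0) → 0 < (phi 1 1 β x y).re) : normSq β < 1 := by
  have := hpos 1 (-β) (by simp)
  rw [phi_one_one_one_neg] at this
  simpa using this

lemma normSq_neg_half_add_mul_sqrtd {d : ℤ} (hd : d ≤ 0) (t : ℝ) :
    normSq (-(1/2) + (t : ℂ) * sqrtd d) = 1/4 - d * t ^ 2 := by
  have h := sqrtd_mul_self hd
  apply ofReal_injective
  rw [normSq_eq_conj_mul_self]
  simp only [map_add, map_mul, map_neg, map_div₀, map_one, map_ofNat, conj_ofReal, conj_sqrtd]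
  push_cast
  linear_combination (-(t:ℂ)^2) * h

lemma phi_add_mul_sqrtd {d : ℤ} (hd : d ≤ 0) (t : ℝ) (a₁ a₂ b₁ b₂ : ℚ) :
    phi 1 1 (-(1/2) + (t : ℂ) * sqrtd d) (a₁ + a₂ * sqrtd d) (b₁ + b₂ * sqrtd d) =
      ((a₁ ^ 2 - d * a₂ ^ 2 + b₁ ^ 2 - d * b₂ ^ 2 - a₁ * b₁ + d * a₂ * b₂
        + 2 * t * d * (a₂ * b₁ - a₁ * b₂) : ℝ) : ℂ) := by
  have h := sqrtd_mul_self hd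
  simp only [phi, map_add, map_mul, map_neg, map_div₀, map_one, map_ofNat, conj_ofReal, conj_sqrtd,
    map_ratCast]
  push_cast
  linear_combination (-(a₂:ℂ)^2 - b₂^2 + a₂*b₂ + 2*t*(a₂*b₁ - a₁*b₂)) * h

theorem stmt7_general (d : ℤ) (hd : d < 0) (t : ℝ)
    (hpos : ∀ x y : ℂ, ¬(x = 0 ∧ y = 0) →
      0 < (phi 1 1 (-(1/2) + (t : ℂ) * sqrtd d) x y).re)
    (a₁ a₂ b₁ b₂ : ℚ) (hab : a₁ * b₂ ≠ a₂ * b₁)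
    (hmin : phi 1 1 (-(1/2) + (t : ℂ) * sqrtd d)
      ((a₁ : ℂ) + (a₂ : ℂ) * sqrtd d) ((b₁ : ℂ) + (b₂ : ℂ) * sqrtd d) = 1) :
    -((d : ℚ) * (1 - a₁^2 + a₂^2*(d : ℚ) + a₁*b₁ - a₂*(d : ℚ)*b₂ - b₁^2 + b₂^2*(d : ℚ))^2) /
      (2*(d : ℚ)*a₁*b₂ - 2*(d : ℚ)*a₂*b₁)^2 < 3/4 := by
  have ht : -(d : ℝ) * t ^ 2 < 3/4 := by
    have := normSq_lt_one_of_phi_pos hpos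
    rw [normSq_neg_half_add_mul_sqrtd hd.le] at this
    linarith
  rw [phi_add_mul_sqrtd hd.le, ← ofReal_one, ofReal_inj] at hmin
  have hD : (2 * d * a₁ * b₂ - 2 * d * a₂ * b₁ : ℝ) ≠ 0 := by
    have hd0 : (d : ℝ) ≠ 0 := by exact_mod_cast hd.ne
    have hab' : (a₁ * b₂ - a₂ * b₁ : ℝ) ≠ 0 := sub_ne_zero.mpr (by exact_mod_cast hab)
    rw [show (2 * d * a₁ * b₂ - 2 * d * a₂ * b₁ : ℝ) = 2 * d * (a₁ * b₂ - a₂ * b₁) by ring]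
    positivity
  have hN : (1 - a₁^2 + a₂^2*d + a₁*b₁ - a₂*d*b₂ - b₁^2 + b₂^2*d : ℝ) =
      -t * (2 * d * a₁ * b₂ - 2 * d * a₂ * b₁) := by
    linear_combination -hmin
  rw [← Rat.cast_lt (K := ℝ)]
  push_cast
  calc _ = -(d : ℝ) * t ^ 2 := by rw [hN, div_eq_iff (pow_ne_zero 2 hD)]; ring
    _ < 3/4 := ht

theorem stmt7 (d : ℤ) (hd : d < 0) (hsf : Squarefree d) (t : ℝ)
    (hpos : ∀ x y : ℂ, ¬(x = 0 ∧ y = 0) →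
      0 < (phi 1 1 (-(1/2) + (t : ℂ) * sqrtd d) x y).re)
    (a₁ a₂ b₁ b₂ : ℚ) (hab : a₁ * b₂ ≠ a₂ * b₁)
    (hmin : phi 1 1 (-(1/2) + (t : ℂ) * sqrtd d)
      ((a₁ : ℂ) + (a₂ : ℂ) * sqrtd d) ((b₁ : ℂ) + (b₂ : ℂ) * sqrtd d) = 1) :
    -((d : ℚ) * (1 - a₁^2 + a₂^2*(d : ℚ) + a₁*b₁ - a₂*(d : ℚ)*b₂ - b₁^2 + b₂^2*(d : ℚ))^2) /
      (2*(d : ℚ)*a₁*b₂ - 2*(d : ℚ)*a₂*b₁)^2 < 3/4 :=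
  stmt7_general d hd t hpos a₁ a₂ b₁ b₂ hab hmin
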